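/- For all parameters A, B, C ∈ ℂ with (C;q)_n ≠ 0 for all n, and all x, y ∈ ℂ with |x| < 1 and |y| < 1, the bibasic Humbert function satisfies Φ₁(A,B;qC;q,q₁;x,y) = C·Φ₁(A,B;qC;q,q₁;qx,qy) + (1−C)·Φ₁(A,B;C;q,q₁;x,y). (Equation (2.6), with C = q^c.) -/

import Mathlib

open Complex

/-- The q-shifted factorial (z;q)_n = prod_{r=0}^{n-1} (1 - z q^r). -/
noncomputable def qPoch (q z : ℂ) (n : ℕ) : ℂ :=
  ∏ r ∈ Finset.range n, (1 - z * q ^ r)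

/-- The bibasic Humbert hypergeometric function Φ₁ on two independent bases q and q₁. -/
noncomputable def Phi1 (q q1 A B C x y : ℂ) : ℂ :=
  ∑' p : ℕ × ℕ,
    qPoch q A (p.1 + p.2) * qPoch q1 B p.1 /
      (qPoch q C (p.1 + p.2) * qPoch q1 q1 p.1 * qPoch q q p.2) * x ^ p.1 * y ^ p.2

/-- The Jackson p-derivative. -/
noncomputable def jackson (p : ℂ) (f : ℂ → ℂ) (x : ℂ) : ℂ :=
  (f x - f (p * x)) / ((1 - p) * x)

/-!
Termwise, the shift `(C;q)ₙ (1 - C qⁿ) = (C;q)ₙ₊₁ = (1 - C) (qC;q)ₙ` gives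
`1 / (qC;q)ₙ = C qⁿ / (qC;q)ₙ + (1 - C) / (C;q)ₙ` with `n = l + k`, and the factor `q^(l+k)` is
absorbed into `(qx)^l (qy)^k`. The three series converge absolutely because `(z;q)ₙ` tends to the
infinite product `(z;q)_∞`, which is nonzero when no factor vanishes; hence the coefficients of
`Φ₁` are bounded and the series is dominated by a double geometric series.
-/

open Filter Topology

lemma qPoch_succ (q z : ℂ) (n : ℕ) : qPoch q z (n + 1) = qPoch q z n * (1 - z * q ^ n) :=
  Finset.prod_range_succ _ n

lemma qPoch_succ' (q z : ℂ) (n : ℕ) : qPoch q z (n + 1) = (1 - z) * qPoch q (q * z) n := by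
  rw [qPoch, qPoch, Finset.prod_range_succ', mul_comm]
  simp only [pow_succ, pow_zero, mul_one]
  congr 1
  exact Finset.prod_congr rfl fun r _ => by ring

lemma qPoch_mul_ne_zero {q z : ℂ} (hz : ∀ n, qPoch q z n ≠ 0) (n : ℕ) :
    qPoch q (q * z) n ≠ 0 :=
  right_ne_zero_of_mul (qPoch_succ' q z n ▸ hz (n + 1))

lemma qPoch_self_ne_zero {q : ℂ} (hq : ‖q‖ < 1) (n : ℕ) : qPoch q q n ≠ 0 := by
  refine Finset.prod_ne_zero_iff.mpr fun r _ => sub_ne_zero.mpr fun h => ?_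
  have hlt : ‖q ^ (r + 1)‖ < 1 := by
    rw [norm_pow]; exact pow_lt_one₀ (norm_nonneg q) hq r.succ_ne_zero
  rw [pow_succ', ← h, norm_one] at hlt
  exact lt_irrefl 1 hlt

lemma inv_qPoch_mul_eq {q C : ℂ} (hC : ∀ n, qPoch q C n ≠ 0) (n : ℕ) :
    (qPoch q (q * C) n)⁻¹ = C * q ^ n * (qPoch q (q * C) n)⁻¹ + (1 - C) * (qPoch q C n)⁻¹ := by
  have hshift : qPoch q C n * (1 - C * q ^ n) = (1 - C) * qPoch q (q * C) n := by
    rw [← qPoch_succ, qPoch_succ']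
  have hCn := hC n
  have hqCn := qPoch_mul_ne_zero hC n
  field_simp
  linear_combination hshift

section Convergence

variable {q : ℂ}

lemma summable_norm_neg_mul_pow (hq : ‖q‖ < 1) (z : ℂ) : Summable fun r : ℕ => ‖-(z * q ^ r)‖ := by
  simpa only [norm_neg, norm_mul, norm_pow] using
    (summable_geometric_of_lt_one (norm_nonneg q) hq).mul_left ‖z‖

lemma tendsto_qPoch (hq : ‖q‖ < 1) (z : ℂ) :
    Tendsto (qPoch q z) atTop (𝓝 (∏' r, (1 - z * q ^ r))) := by
  unfold qPoch
  simpa only [← sub_eq_add_neg] using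
    (multipliable_one_add_of_summable (summable_norm_neg_mul_pow hq z)).tendsto_prod_tprod_nat

lemma tprod_one_sub_mul_pow_ne_zero (hq : ‖q‖ < 1) (z : ℂ) (hz : ∀ n, qPoch q z n ≠ 0) :
    ∏' r, (1 - z * q ^ r) ≠ 0 := by
  simp only [sub_eq_add_neg]
  refine tprod_one_add_ne_zero_of_summable (fun r => ?_) (summable_norm_neg_mul_pow hq z)
  simpa only [← sub_eq_add_neg] using right_ne_zero_of_mul (qPoch_succ q z r ▸ hz (r + 1))

lemma exists_norm_qPoch_le (hq : ‖q‖ < 1) (z : ℂ) : ∃ M, ∀ n, ‖qPoch q z n‖ ≤ M :=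
  isBounded_iff_forall_norm_le.mp (Metric.isBounded_range_of_tendsto _ (tendsto_qPoch hq z))
    |>.imp fun _ h n => h _ ⟨n, rfl⟩

lemma exists_norm_inv_qPoch_le (hq : ‖q‖ < 1) (z : ℂ) (hz : ∀ n, qPoch q z n ≠ 0) :
    ∃ M, ∀ n, ‖(qPoch q z n)⁻¹‖ ≤ M :=
  isBounded_iff_forall_norm_le.mp (Metric.isBounded_range_of_tendsto _
    ((tendsto_qPoch hq z).inv₀ (tprod_one_sub_mul_pow_ne_zero hq z hz)))
    |>.imp fun _ h n => h _ ⟨n, rfl⟩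

end Convergence

lemma summable_mul_pow_mul_pow {𝕜 : Type*} [NormedField 𝕜] [CompleteSpace 𝕜] {c : ℕ × ℕ → 𝕜}
    {M : ℝ} (hc : ∀ p, ‖c p‖ ≤ M) {x y : 𝕜} (hx : ‖x‖ < 1) (hy : ‖y‖ < 1) :
    Summable fun p : ℕ × ℕ => c p * x ^ p.1 * y ^ p.2 := by
  have hgeom : Summable fun p : ℕ × ℕ => ‖x‖ ^ p.1 * ‖y‖ ^ p.2 :=
    (summable_geometric_of_lt_one (norm_nonneg x) hx).mul_of_nonneg
      (summable_geometric_of_lt_one (norm_nonneg y) hy) (fun _ => by positivity)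
      (fun _ => by positivity)
  refine (hgeom.mul_left M).of_norm_bounded fun p => ?_
  rw [norm_mul, norm_mul, norm_pow, norm_pow, mul_assoc]
  exact mul_le_mul_of_nonneg_right (hc p) (by positivity)

noncomputable def phi1Coeff (q q1 A B C : ℂ) (p : ℕ × ℕ) : ℂ :=
  qPoch q A (p.1 + p.2) * qPoch q1 B p.1 /
    (qPoch q C (p.1 + p.2) * qPoch q1 q1 p.1 * qPoch q q p.2)

lemma Phi1_eq_tsum (q q1 A B C x y : ℂ) :
    Phi1 q q1 A B C x y = ∑' p : ℕ × ℕ, phi1Coeff q q1 A B C p * x ^ p.1 * y ^ p.2 :=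
  rfl

lemma exists_norm_phi1Coeff_le {q q1 : ℂ} (hq : ‖q‖ < 1) (hq1 : ‖q1‖ < 1) (A B : ℂ) {C : ℂ}
    (hC : ∀ n, qPoch q C n ≠ 0) : ∃ M, ∀ p, ‖phi1Coeff q q1 A B C p‖ ≤ M := by
  obtain ⟨MA, hMA⟩ := exists_norm_qPoch_le hq A
  obtain ⟨MB, hMB⟩ := exists_norm_qPoch_le hq1 B
  obtain ⟨MC, hMC⟩ := exists_norm_inv_qPoch_le hq C hC
  obtain ⟨M1, hM1⟩ := exists_norm_inv_qPoch_le hq1 q1 (qPoch_self_ne_zero hq1)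
  obtain ⟨Mq, hMq⟩ := exists_norm_inv_qPoch_le hq q (qPoch_self_ne_zero hq)
  have h0 {M : ℝ} {u : ℕ → ℂ} (h : ∀ n, ‖u n‖ ≤ M) : 0 ≤ M := (norm_nonneg _).trans (h 0)
  refine ⟨MA * MB * (MC * M1 * Mq), fun p => ?_⟩
  rw [phi1Coeff, div_eq_mul_inv, mul_inv, mul_inv]
  simp only [norm_mul]
  gcongr
  exacts [mul_nonneg (h0 hMA) (h0 hMB), h0 hMA, hMA _, hMB _, mul_nonneg (h0 hMC) (h0 hM1), h0 hMC,
    hMC _, hM1 _, hMq _]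

lemma summable_phi1 {q q1 : ℂ} (hq : ‖q‖ < 1) (hq1 : ‖q1‖ < 1) (A B : ℂ) {C x y : ℂ}
    (hC : ∀ n, qPoch q C n ≠ 0) (hx : ‖x‖ < 1) (hy : ‖y‖ < 1) :
    Summable fun p : ℕ × ℕ => phi1Coeff q q1 A B C p * x ^ p.1 * y ^ p.2 :=
  let ⟨_, hM⟩ := exists_norm_phi1Coeff_le hq hq1 A B hC
  summable_mul_pow_mul_pow hM hx hy

lemma phi1Coeff_mul_eq (q q1 A B : ℂ) {C : ℂ} (hC : ∀ n, qPoch q C n ≠ 0) (p : ℕ × ℕ) :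
    phi1Coeff q q1 A B (q * C) p =
      C * q ^ (p.1 + p.2) * phi1Coeff q q1 A B (q * C) p + (1 - C) * phi1Coeff q q1 A B C p := by
  simp only [phi1Coeff, div_eq_mul_inv, mul_inv]
  linear_combination (qPoch q A (p.1 + p.2) * qPoch q1 B p.1 * ((qPoch q1 q1 p.1)⁻¹ *
    (qPoch q q p.2)⁻¹)) * inv_qPoch_mul_eq hC (p.1 + p.2)

theorem stmt5_general (q q1 A B C x y : ℂ)
    (hq1 : ‖q‖ < 1)
    (hq11 : ‖q1‖ < 1)
    (hC : ∀ n : ℕ, qPoch q C n ≠ 0)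
    (hx : ‖x‖ < 1) (hy : ‖y‖ < 1) :
    Phi1 q q1 A B (q * C) x y =
      C * Phi1 q q1 A B (q * C) (q * x) (q * y)
        + (1 - C) * Phi1 q q1 A B C x y := by
  have hqx : ‖q * x‖ < 1 :=
    (norm_mul q x).trans_lt (mul_lt_one_of_nonneg_of_lt_one_right hq1.le (norm_nonneg x) hx)
  have hqy : ‖q * y‖ < 1 :=
    (norm_mul q y).trans_lt (mul_lt_one_of_nonneg_of_lt_one_right hq1.le (norm_nonneg y) hy)
  simp only [Phi1_eq_tsum]
  rw [← tsum_mul_left, ← tsum_mul_left, ← Summable.tsum_add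
    ((summable_phi1 hq1 hq11 A B (qPoch_mul_ne_zero hC) hqx hqy).mul_left C)
    ((summable_phi1 hq1 hq11 A B hC hx hy).mul_left (1 - C))]
  refine tsum_congr fun p => ?_
  linear_combination (x ^ p.1 * y ^ p.2) * phi1Coeff_mul_eq q q1 A B hC p

theorem stmt5 (q q1 A B C x y : ℂ)
    (hq0 : 0 < ‖q‖) (hq1 : ‖q‖ < 1)
    (hq10 : 0 < ‖q1‖) (hq11 : ‖q1‖ < 1)
    (hC : ∀ n : ℕ, qPoch q C n ≠ 0)
    (hx : ‖x‖ < 1) (hy : ‖y‖ < 1) :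
    Phi1 q q1 A B (q * C) x y =
      C * Phi1 q q1 A B (q * C) (q * x) (q * y)
        + (1 - C) * Phi1 q q1 A B C x y :=
  stmt5_general q q1 A B C x y hq1 hq11 hC hx hy
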